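/- Let n ≥ 1, let A, B ∈ ℙ_n, and let s, t be real numbers with 0 < s ≤ t ≤ 1. Then in the Loewner order: ((A^s + B^{-s})/2)^t ≤ ((A^t + B^{-t})/2)^s. -/

import Mathlib

open Matrix
open scoped ComplexOrder

/-- Real power `A^t = exp(t · log A)` of a Hermitian positive definite matrix, defined via
the functional calculus (spectral decomposition). -/
noncomputable def mpow {n : ℕ} (A : Matrix (Fin n) (Fin n) ℂ) (t : ℝ) :
    Matrix (Fin n) (Fin n) ℂ :=
  if hA : A.IsHermitian then
    (hA.eigenvectorUnitary : Matrix (Fin n) (Fin n) ℂ) *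
      Matrix.diagonal (fun i => ((hA.eigenvalues i ^ t : ℝ) : ℂ)) *
      (star (hA.eigenvectorUnitary : Matrix (Fin n) (Fin n) ℂ))
  else A

/-- Logarithm of a Hermitian positive definite matrix via the functional calculus. -/
noncomputable def mlog {n : ℕ} (A : Matrix (Fin n) (Fin n) ℂ) : Matrix (Fin n) (Fin n) ℂ :=
  if hA : A.IsHermitian then
    (hA.eigenvectorUnitary : Matrix (Fin n) (Fin n) ℂ) *
      Matrix.diagonal (fun i => ((Real.log (hA.eigenvalues i) : ℝ) : ℂ)) *
      (star (hA.eigenvectorUnitary : Matrix (Fin n) (Fin n) ℂ))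
  else A

/-- Metric geometric mean `A # B = A^{1/2} (A^{-1/2} B A^{-1/2})^{1/2} A^{1/2}`. -/
noncomputable def geomMean {n : ℕ} (A B : Matrix (Fin n) (Fin n) ℂ) :
    Matrix (Fin n) (Fin n) ℂ :=
  mpow A (1/2) * mpow (mpow A (-(1/2)) * B * mpow A (-(1/2))) (1/2) * mpow A (1/2)

/-- Weighted spectral geometric mean `A ♮_t B = (A⁻¹ # B)^t A (A⁻¹ # B)^t`. -/
noncomputable def spectralMean {n : ℕ} (t : ℝ) (A B : Matrix (Fin n) (Fin n) ℂ) :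
    Matrix (Fin n) (Fin n) ℂ :=
  mpow (geomMean A⁻¹ B) t * A * mpow (geomMean A⁻¹ B) t

/-!
With `r = s / t`, operator concavity of `x ↦ x ^ r` applied to `A ^ t` and `B ^ (-t)` gives
`(A ^ s + B ^ (-s)) / 2 ≤ ((A ^ t + B ^ (-t)) / 2) ^ r`, and operator monotonicity of `x ↦ x ^ t`
(Löwner–Heinz) raises both sides to the power `t`. Both facts hold in any C⋆-algebra, and
`mpow` is the functional-calculus power on positive semidefinite matrices.
-/

open scoped Matrix.Norms.L2Operator MatrixOrder

namespace CFC

variable {A : Type*} [CStarAlgebra A] [PartialOrder A] [StarOrderedRing A]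
  {a b : A} {μ ν s t : ℝ}

lemma convexComb_rpow_le_rpow_convexComb_rpow (ha : 0 ≤ a) (hb : 0 ≤ b) (hμ : 0 ≤ μ)
    (hν : 0 ≤ ν) (hμν : μ + ν = 1) (hs : 0 < s) (hst : s ≤ t) :
    μ • a ^ s + ν • b ^ s ≤ (μ • a ^ t + ν • b ^ t) ^ (s / t) := by
  have ht : 0 < t := hs.trans_le hst
  have hr : s / t ∈ Set.Icc (0 : ℝ) 1 := ⟨by positivity, (div_le_one ht).2 hst⟩
  have hconc := (concaveOn_rpow hr).2 (Set.mem_Ici.2 (rpow_nonneg (a := a) (y := t)))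
    (Set.mem_Ici.2 (rpow_nonneg (a := b) (y := t))) hμ hν hμν
  beta_reduce at hconc
  rwa [rpow_rpow_of_exponent_nonneg a t _ ht.le hr.1, rpow_rpow_of_exponent_nonneg b t _ ht.le hr.1,
    mul_div_cancel₀ s ht.ne'] at hconc

lemma rpow_convexComb_rpow_le (ha : 0 ≤ a) (hb : 0 ≤ b) (hμ : 0 ≤ μ) (hν : 0 ≤ ν)
    (hμν : μ + ν = 1) (hs : 0 < s) (hst : s ≤ t) (ht : t ≤ 1) :
    (μ • a ^ s + ν • b ^ s) ^ t ≤ (μ • a ^ t + ν • b ^ t) ^ s := by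
  have ht₀ : 0 < t := hs.trans_le hst
  have hc : 0 ≤ μ • a ^ t + ν • b ^ t :=
    add_nonneg (smul_nonneg hμ rpow_nonneg) (smul_nonneg hν rpow_nonneg)
  calc (μ • a ^ s + ν • b ^ s) ^ t ≤ ((μ • a ^ t + ν • b ^ t) ^ (s / t)) ^ t :=
        rpow_le_rpow ⟨ht₀.le, ht⟩
          (convexComb_rpow_le_rpow_convexComb_rpow ha hb hμ hν hμν hs hst)
    _ = (μ • a ^ t + ν • b ^ t) ^ s := by
        rw [rpow_rpow_of_exponent_nonneg _ _ _ (by positivity) ht₀.le hc,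
          div_mul_cancel₀ s ht₀.ne']

end CFC

lemma mpow_eq_rpow {n : ℕ} {A : Matrix (Fin n) (Fin n) ℂ} (hA : 0 ≤ A) (t : ℝ) :
    mpow A t = A ^ t := by
  have hA' := (Matrix.nonneg_iff_posSemidef.1 hA).1
  rw [CFC.rpow_eq_cfc_real hA, hA'.cfc_eq, mpow, dif_pos hA']
  rfl

theorem average_rpow_loewner {n : ℕ} (A B : Matrix (Fin n) (Fin n) ℂ)
    (hA : A.PosDef) (hB : B.PosDef) (s t : ℝ) (hs : 0 < s) (hst : s ≤ t) (ht : t ≤ 1) :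
    (mpow ((1 / 2 : ℝ) • (mpow A t + mpow B (-t))) s -
      mpow ((1 / 2 : ℝ) • (mpow A s + mpow B (-s))) t).PosSemidef := by
  have hA₀ : 0 ≤ A := hA.isStrictlyPositive.nonneg
  have hB₀ : 0 ≤ B := hB.isStrictlyPositive.nonneg
  have hB_neg : ∀ u : ℝ, B ^ (-u) = (B ^ (-1 : ℝ)) ^ u := fun u => by
    rw [CFC.rpow_rpow B _ _ (by norm_num) hB.isStrictlyPositive, neg_one_mul]
  have havg : ∀ u : ℝ, 0 ≤ (1 / 2 : ℝ) • (A ^ u + (B ^ (-1 : ℝ)) ^ u) := fun u =>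
    smul_nonneg (by norm_num) (add_nonneg CFC.rpow_nonneg CFC.rpow_nonneg)
  rw [← Matrix.le_iff, mpow_eq_rpow hA₀, mpow_eq_rpow hA₀, mpow_eq_rpow hB₀, mpow_eq_rpow hB₀,
    hB_neg s, hB_neg t, mpow_eq_rpow (havg t), mpow_eq_rpow (havg s), smul_add, smul_add]
  exact CFC.rpow_convexComb_rpow_le hA₀ CFC.rpow_nonneg (by norm_num) (by norm_num) (by norm_num)
    hs hst ht
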